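/- arXiv:2007.15368 — 6 statements merged into one kernel-verified Lean document; each statement's English description precedes it below -/
import Mathlib

section
/- For every finite simple graph G with at least one edge, the chromatic-stability index of G is at most the chromatic bondage number of G, i.e., es_χ(G) ≤ ρ(G). -/
open Function

/-- The chromatic-stability index: the minimum number of edges whose removal
decreases the chromatic number (0 if no such edge set exists, e.g. for edgeless graphs). -/
noncomputable def esChi {V : Type*} [Fintype V] (G : SimpleGraph V) : ℕ :=
  sInf {k | ∃ F : Finset (Sym2 V),
    ↑F ⊆ G.edgeSet ∧ F.card = k ∧
    (G.deleteEdges ↑F).chromaticNumber < G.chromaticNumber}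

open scoped Classical in
/-- The color class of color `i` under the coloring `c`, as a `Finset`. -/
noncomputable def classOf {V : Type*} [Fintype V] {G : SimpleGraph V} {α : Type*}
    (c : G.Coloring α) (i : α) : Finset V :=
  Finset.univ.filter fun v => c v = i

open scoped Classical in
/-- The number of edges of `G` with one endpoint in `A` and the other in `B`
(for disjoint `A`, `B`). -/
noncomputable def eCC {V : Type*} [Fintype V] (G : SimpleGraph V) (A B : Finset V) : ℕ :=
  ((A ×ˢ B).filter fun p => G.Adj p.1 p.2).card

/-- `c*`: the minimum size of a color class over all proper colorings of `G`
using exactly `χ(G)` colors. -/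
noncomputable def cStar {V : Type*} [Fintype V] (G : SimpleGraph V) : ℕ :=
  sInf {k | ∃ (c : G.Coloring (Fin G.chromaticNumber.toNat))
      (i : Fin G.chromaticNumber.toNat),
    Surjective c ∧ k = (classOf c i).card}

/-- The chromatic bondage number: the minimum number of edges between two distinct
color classes, over all proper colorings of `G` using exactly `χ(G)` colors. -/
noncomputable def rhoChi {V : Type*} [Fintype V] (G : SimpleGraph V) : ℕ :=
  sInf {k | ∃ (c : G.Coloring (Fin G.chromaticNumber.toNat))
      (i j : Fin G.chromaticNumber.toNat),
    Surjective c ∧ i ≠ j ∧ k = eCC G (classOf c i) (classOf c j)}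

/-!
Take a colouring with `χ(G)` colours and two classes `i ≠ j` joined by exactly `ρ(G)` edges.
Deleting those edges, class `j` can be recoloured with colour `i`, so `G` minus `ρ(G)` edges
has a proper colouring with `χ(G) - 1` colours.
-/

namespace SimpleGraph

variable {V α : Type*} {G : SimpleGraph V}

lemma coe_chromaticNumber_toNat [Finite V] (G : SimpleGraph V) :
    (G.chromaticNumber.toNat : ℕ∞) = G.chromaticNumber :=
  ENat.natCast_toNat <|
    chromaticNumber_ne_top_iff_exists.mpr ⟨_, G.colorable_chromaticNumber_of_fintype⟩

def Coloring.mergeClasses [DecidableEq α] (c : G.Coloring α) {i j : α} (hij : i ≠ j)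
    (F : Set (Sym2 V))
    (hF : ∀ u v, G.Adj u v → c u = i → c v = j → s(u, v) ∈ F) :
    (G.deleteEdges F).Coloring {x : α // x ≠ j} :=
  Coloring.mk (fun v => if hv : c v = j then ⟨i, hij⟩ else ⟨c v, hv⟩) fun {u v} huv => by
    obtain ⟨hadj, hnotF⟩ := (deleteEdges_adj ..).mp huv
    have hne := c.valid hadj
    by_cases hu : c u = j <;> by_cases hv : c v = j
    · exact absurd (hu.trans hv.symm) hne
    · rw [dif_pos hu, dif_neg hv, ne_eq, Subtype.mk.injEq]
      exact fun hvi => hnotF (Sym2.eq_swap ▸ hF v u hadj.symm hvi.symm hu)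
    · rw [dif_neg hu, dif_pos hv, ne_eq, Subtype.mk.injEq]
      exact fun hui => hnotF (hF u v hadj hui hv)
    · rw [dif_neg hu, dif_neg hv, ne_eq, Subtype.mk.injEq]
      exact hne

lemma chromaticNumber_deleteEdges_lt [Fintype α] [DecidableEq α]
    (hχ : Fintype.card α ≤ G.chromaticNumber)
    (c : G.Coloring α) {i j : α} (hij : i ≠ j) (F : Set (Sym2 V))
    (hF : ∀ u v, G.Adj u v → c u = i → c v = j → s(u, v) ∈ F) :
    (G.deleteEdges F).chromaticNumber < G.chromaticNumber :=
  calc (G.deleteEdges F).chromaticNumber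
      ≤ Fintype.card {x : α // x ≠ j} := (c.mergeClasses hij F hF).colorable.chromaticNumber_le
    _ = (Fintype.card α - 1 : ℕ) := by simp [Fintype.card_subtype_compl]
    _ < Fintype.card α := by exact_mod_cast Nat.sub_one_lt (Fintype.card_pos_iff.mpr ⟨i⟩).ne'
    _ ≤ G.chromaticNumber := hχ

end SimpleGraph

open SimpleGraph

theorem esChi_le_eCC {V α : Type*} [Fintype V] [Fintype α] {G : SimpleGraph V}
    (c : G.Coloring α) (hχ : Fintype.card α ≤ G.chromaticNumber) {i j : α} (hij : i ≠ j) :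
    esChi G ≤ eCC G (classOf c i) (classOf c j) := by
  classical
  let P := (classOf c i ×ˢ classOf c j).filter fun p => G.Adj p.1 p.2
  let F : Finset (Sym2 V) := P.image fun p => s(p.1, p.2)
  have hP : ∀ u v, G.Adj u v → c u = i → c v = j → s(u, v) ∈ F := fun u v h hu hv =>
    Finset.mem_image.mpr ⟨(u, v), by simp [P, classOf, hu, hv, h], rfl⟩
  have hsub : ↑F ⊆ G.edgeSet := by
    intro e he
    obtain ⟨p, hp, rfl⟩ := Finset.mem_image.mp he
    exact (Finset.mem_filter.mp hp).2
  calc esChi G ≤ F.card :=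
        Nat.sInf_le ⟨F, hsub, rfl, chromaticNumber_deleteEdges_lt hχ c hij _ hP⟩
    _ ≤ P.card := Finset.card_image_le
    _ = eCC G (classOf c i) (classOf c j) := rfl

theorem exists_eCC_eq_rhoChi {V : Type*} [Fintype V] {G : SimpleGraph V}
    (h : G.edgeSet.Nonempty) :
    ∃ (c : G.Coloring (Fin G.chromaticNumber.toNat)) (i j : Fin G.chromaticNumber.toNat),
      i ≠ j ∧ rhoChi G = eCC G (classOf c i) (classOf c j) := by
  have hsurj : ∀ c : G.Coloring (Fin G.chromaticNumber.toNat), Surjective c :=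
    le_chromaticNumber_iff_forall_surjective.mp (coe_chromaticNumber_toNat G).le
  obtain ⟨c⟩ := G.colorable_chromaticNumber_of_fintype
  obtain ⟨e, he⟩ := h
  induction e with
  | h u v =>
    obtain ⟨c, i, j, -, hij, hρ⟩ : rhoChi G ∈ _ :=
      Nat.sInf_mem ⟨_, c, c u, c v, hsurj c, c.valid he, rfl⟩
    exact ⟨c, i, j, hij, hρ⟩

/-- For every finite simple graph `G` with at least one edge,
`es_χ(G) ≤ ρ(G)`. -/
theorem esChi_le_rhoChi {V : Type*} [Fintype V] (G : SimpleGraph V)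
    (h : G.edgeSet.Nonempty) :
    esChi G ≤ rhoChi G := by
  obtain ⟨c, i, j, hij, hρ⟩ := exists_eCC_eq_rhoChi h
  exact hρ ▸ esChi_le_eCC c (by simp [coe_chromaticNumber_toNat]) hij
end

section
/- Let G be a finite simple graph with χ(G) ≥ 2. Then the following are equivalent: (i) es_χ(G) = 1; (ii) ρ(G) = 1; (iii) G admits a proper coloring with color classes (C_1, …, C_{χ(G)}) using exactly χ(G) colors such that |C_1| = 1 and there is exactly one edge between C_1 and C_2. -/
open Function

/-!
An edge `uv` is critical when `χ(G - uv) < χ(G)`, and `es_χ(G) = 1` says exactly that a critical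
edge exists. Given one, a `(χ(G) - 1)`-colouring of `G - uv` must give `u` and `v` the same colour,
so recolouring `u` with a fresh colour yields a `χ(G)`-colouring in which `{u}` is a class joined
to the class of `v` by the single edge `uv`. Conversely, if two classes of a `χ(G)`-colouring span
a single edge, deleting that edge lets the two classes merge, so the edge is critical. The same
merging argument shows that any two classes of a `χ(G)`-colouring span an edge, so `ρ(G) ≥ 1`.
-/

open SimpleGraph Fintype

theorem Nat.sInf_eq_one_iff_of_zero_notMem {s : Set ℕ} (h0 : 0 ∉ s) : sInf s = 1 ↔ 1 ∈ s := by
  refine ⟨fun h => h ▸ Nat.sInf_mem (Nat.nonempty_of_pos_sInf (by omega)), fun h1 => ?_⟩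
  refine le_antisymm (Nat.sInf_le h1) (Nat.one_le_iff_ne_zero.2 fun h => h0 ?_)
  exact h ▸ Nat.sInf_mem ⟨1, h1⟩

section Classes

variable {V : Type*} [Fintype V] {G : SimpleGraph V}

@[simp]
theorem mem_classOf {α : Type*} {c : G.Coloring α} {i : α} {v : V} :
    v ∈ classOf c i ↔ c v = i := by
  simp [classOf]

theorem eCC_eq_zero_iff {A B : Finset V} :
    eCC G A B = 0 ↔ ∀ a ∈ A, ∀ b ∈ B, ¬G.Adj a b := by
  simp only [eCC, Finset.card_eq_zero, Finset.filter_eq_empty_iff, Finset.mem_product, Prod.forall,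
    and_imp]
  exact ⟨fun h a ha b hb => h a b ha hb, fun h a b ha hb => h a ha b hb⟩

theorem eCC_eq_one_iff {A B : Finset V} :
    eCC G A B = 1 ↔
      ∃ a ∈ A, ∃ b ∈ B, G.Adj a b ∧ ∀ a' ∈ A, ∀ b' ∈ B, G.Adj a' b' → a' = a ∧ b' = b := by
  simp only [eCC, Finset.card_eq_one, Finset.eq_singleton_iff_unique_mem, Finset.mem_filter,
    Finset.mem_product, Prod.exists, Prod.forall, Prod.mk.injEq]
  constructor
  · rintro ⟨a, b, ⟨⟨ha, hb⟩, hab⟩, huniq⟩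
    exact ⟨a, ha, b, hb, hab, fun a' ha' b' hb' h => huniq a' b' ⟨⟨ha', hb'⟩, h⟩⟩
  · rintro ⟨a, ha, b, hb, hab, huniq⟩
    exact ⟨a, b, ⟨⟨ha, hb⟩, hab⟩, fun a' b' ⟨⟨ha', hb'⟩, h⟩ => huniq a' ha' b' hb' h⟩

end Classes

namespace SimpleGraph

variable {V α : Type*} {G : SimpleGraph V}

def IsCriticalEdge (G : SimpleGraph V) (u v : V) : Prop :=
  G.Adj u v ∧ (G.deleteEdges {s(u, v)}).chromaticNumber < G.chromaticNumber

theorem chromaticNumber_eq_toNat [Finite V] : G.chromaticNumber = G.chromaticNumber.toNat := by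
  have := Fintype.ofFinite V
  exact (ENat.natCast_toNat (ne_top_of_le_ne_top (ENat.natCast_ne_top _)
    G.chromaticNumber_le_card)).symm

/-- Merging two colour classes that span no edge saves a colour. -/
theorem Coloring.chromaticNumber_lt_of_forall_adj [Fintype α] (c : G.Coloring α) {i j : α}
    (hij : i ≠ j) (h : ∀ u v, G.Adj u v → c u = i → c v ≠ j) :
    G.chromaticNumber < card α := by
  classical
  let merged : G.Coloring α := Coloring.mk (fun v => if c v = j then i else c v) fun {u v} huv => by
    split_ifs with hu hv hv
    · exact absurd (hu.trans hv.symm) (c.valid huv)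
    · exact fun e => h v u huv.symm e.symm hu
    · exact fun e => h u v huv e hv
    · exact c.valid huv
  have hmiss : ∀ v, merged v ≠ j := fun v => by
    change (if c v = j then i else c v) ≠ j
    split_ifs with hv
    exacts [hij, hv]
  by_contra! hle
  obtain ⟨v, hv⟩ := card_le_chromaticNumber_iff_forall_surjective.1 hle merged j
  exact hmiss v hv

def Coloring.ofDeleteEdge {β : Type*} {u v : V} (d : (G.deleteEdges {s(u, v)}).Coloring β)
    (h : d u ≠ d v) : G.Coloring β :=
  Coloring.mk d fun {a b} hab => by
    by_cases he : s(a, b) = s(u, v)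
    · rcases Sym2.eq_iff.1 he with ⟨rfl, rfl⟩ | ⟨rfl, rfl⟩
      exacts [h, h.symm]
    · exact d.valid (deleteEdges_adj.2 ⟨hab, he⟩)

theorem IsCriticalEdge.exists_coloring_deleteEdge_eq [Fintype α] {u v : V}
    (he : G.IsCriticalEdge u v) (hχ : G.chromaticNumber = card α) (k : α) :
    ∃ d : (G.deleteEdges {s(u, v)}).Coloring {a // a ≠ k}, d u = d v := by
  classical
  have hH : (G.deleteEdges {s(u, v)}).Colorable (card {a // a ≠ k}) := by
    have hlt := hχ ▸ he.2
    rw [← chromaticNumber_le_iff_colorable, Fintype.card_subtype_compl, Fintype.card_subtype_eq]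
    lift (G.deleteEdges {s(u, v)}).chromaticNumber to ℕ using hlt.ne_top with m
    exact_mod_cast Nat.le_sub_one_of_lt (by exact_mod_cast hlt)
  let d := hH.toColoring le_rfl
  refine ⟨d, by_contra fun hne => ?_⟩
  obtain ⟨w, hw⟩ := card_le_chromaticNumber_iff_forall_surjective.1 hχ.ge
    (G.recolorOfEmbedding (Function.Embedding.subtype _) (d.ofDeleteEdge hne)) k
  exact (d.ofDeleteEdge hne w).2 hw

theorem IsCriticalEdge.exists_coloring [Fintype V] [Fintype α] {u v : V}
    (he : G.IsCriticalEdge u v) (hχ : G.chromaticNumber = card α) :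
    ∃ (c : G.Coloring α) (i j : α),
      i ≠ j ∧ classOf c i = {u} ∧ eCC G (classOf c i) (classOf c j) = 1 := by
  classical
  have h2 : 2 ≤ card α := by exact_mod_cast hχ ▸ two_le_chromaticNumber_of_adj he.1
  obtain ⟨k⟩ := Fintype.card_pos_iff.1 (by omega : 0 < card α)
  obtain ⟨d, hd⟩ := he.exists_coloring_deleteEdge_eq hχ k
  have hvu : v ≠ u := he.1.ne'
  let c : G.Coloring α := Coloring.mk (fun w => if w = u then k else d w) fun {a b} hab => by
    split_ifs with ha hb hb
    · exact absurd (ha.trans hb.symm) hab.ne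
    · exact fun e => (d b).2 e.symm
    · exact (d a).2
    · refine fun e => d.valid (deleteEdges_adj.2 ⟨hab, ?_⟩) (Subtype.ext e)
      rw [Set.mem_singleton_iff, Sym2.eq_iff]
      tauto
  have hcu : c u = k := if_pos rfl
  have hcw {w : V} (hw : w ≠ u) : c w = d w := if_neg hw
  refine ⟨c, k, d v, (d v).2.symm, ?_, eCC_eq_one_iff.2 ⟨u, ?_, v, ?_, he.1, ?_⟩⟩
  · ext w
    by_cases hw : w = u
    · simp [hw, hcu]
    · simp [hw, hcw hw, (d w).2]
  · simpa using hcu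
  · simpa using hcw hvu
  · intro a ha b hb hab
    rw [mem_classOf] at ha hb
    obtain rfl : a = u := by_contra fun h => (d a).2 (hcw h ▸ ha)
    refine ⟨rfl, by_contra fun hbv => ?_⟩
    have hdb : d b = d v := Subtype.ext (hcw hab.ne' ▸ hb)
    refine d.valid (deleteEdges_adj.2 ⟨hab, ?_⟩) (hd.trans hdb.symm)
    rw [Set.mem_singleton_iff, Sym2.eq_iff]
    tauto

theorem isCriticalEdge_of_eCC_eq_one [Fintype V] [Fintype α] (hχ : G.chromaticNumber = card α)
    {c : G.Coloring α} {i j : α} (hij : i ≠ j) (h : eCC G (classOf c i) (classOf c j) = 1) :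
    ∃ u v, G.IsCriticalEdge u v := by
  obtain ⟨u, hu, v, hv, huv, huniq⟩ := eCC_eq_one_iff.1 h
  refine ⟨u, v, huv, hχ ▸ ?_⟩
  refine Coloring.chromaticNumber_lt_of_forall_adj (c.comp (Hom.ofLE (G.deleteEdges_le _))) hij ?_
  intro a b hab ha hb
  obtain ⟨rfl, rfl⟩ := huniq a (mem_classOf.2 ha) b (mem_classOf.2 hb) (deleteEdges_adj.1 hab).1
  exact (deleteEdges_adj.1 hab).2 rfl

end SimpleGraph

theorem esChi_eq_one_iff {V : Type*} [Fintype V] {G : SimpleGraph V} :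
    esChi G = 1 ↔ ∃ u v, G.IsCriticalEdge u v := by
  rw [esChi, Nat.sInf_eq_one_iff_of_zero_notMem]
  · constructor
    · rintro ⟨F, hFG, hF, hlt⟩
      obtain ⟨e, rfl⟩ := Finset.card_eq_one.1 hF
      induction e using Sym2.ind with | _ u v => ?_
      exact ⟨u, v, hFG (Finset.mem_coe.2 (Finset.mem_singleton_self _)), by simpa using hlt⟩
    · rintro ⟨u, v, huv, hlt⟩
      exact ⟨{s(u, v)}, by simpa using huv, Finset.card_singleton _, by simpa using hlt⟩
  · rintro ⟨F, -, hF, hlt⟩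
    rw [Finset.card_eq_zero.1 hF, Finset.coe_empty, deleteEdges_empty] at hlt
    exact hlt.false

theorem rhoChi_eq_one_iff {V : Type*} [Fintype V] {G : SimpleGraph V} :
    rhoChi G = 1 ↔ ∃ (c : G.Coloring (Fin G.chromaticNumber.toNat))
      (i j : Fin G.chromaticNumber.toNat),
      Surjective c ∧ i ≠ j ∧ eCC G (classOf c i) (classOf c j) = 1 := by
  rw [rhoChi, Nat.sInf_eq_one_iff_of_zero_notMem]
  · simp only [Set.mem_ofPred_eq, eq_comm]
  · rintro ⟨c, i, j, -, hij, h0⟩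
    have hlt := c.chromaticNumber_lt_of_forall_adj hij fun u v huv hu hv =>
      eCC_eq_zero_iff.1 h0.symm u (mem_classOf.2 hu) v (mem_classOf.2 hv) huv
    rw [card_fin, ← chromaticNumber_eq_toNat] at hlt
    exact hlt.false

theorem esChi_eq_one_characterization_general {V : Type*} [Fintype V] (G : SimpleGraph V) :
    (esChi G = 1 ↔ rhoChi G = 1) ∧
    (esChi G = 1 ↔
      ∃ (c : G.Coloring (Fin G.chromaticNumber.toNat))
        (i j : Fin G.chromaticNumber.toNat),
        Surjective c ∧ i ≠ j ∧ (classOf c i).card = 1 ∧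
        eCC G (classOf c i) (classOf c j) = 1) := by
  have hχ : G.chromaticNumber = card (Fin G.chromaticNumber.toNat) := by
    rw [card_fin, ← chromaticNumber_eq_toNat]
  rw [esChi_eq_one_iff, rhoChi_eq_one_iff]
  refine ⟨⟨fun ⟨u, v, he⟩ => ?_, fun ⟨_, _, _, _, hij, h⟩ => isCriticalEdge_of_eCC_eq_one hχ hij h⟩,
    ⟨fun ⟨u, v, he⟩ => ?_, fun ⟨_, _, _, _, hij, _, h⟩ => isCriticalEdge_of_eCC_eq_one hχ hij h⟩⟩
  all_goals
    obtain ⟨c, i, j, hij, hi, h⟩ := he.exists_coloring hχ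
    have hc : Surjective c := card_le_chromaticNumber_iff_forall_surjective.1 hχ.ge c
  · exact ⟨c, i, j, hc, hij, h⟩
  · exact ⟨c, i, j, hc, hij, by rw [hi, Finset.card_singleton], h⟩

/-- For a graph `G` with `χ(G) ≥ 2`, the following are equivalent:
(i) `es_χ(G) = 1`; (ii) `ρ(G) = 1`; (iii) `G` has a proper coloring with exactly
`χ(G)` colors, one color class a singleton sending exactly one edge to some other
color class. -/
theorem esChi_eq_one_characterization {V : Type*} [Fintype V] (G : SimpleGraph V)
    (h : 2 ≤ G.chromaticNumber) :
    (esChi G = 1 ↔ rhoChi G = 1) ∧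
    (esChi G = 1 ↔
      ∃ (c : G.Coloring (Fin G.chromaticNumber.toNat))
        (i j : Fin G.chromaticNumber.toNat),
        Surjective c ∧ i ≠ j ∧ (classOf c i).card = 1 ∧
        eCC G (classOf c i) (classOf c j) = 1) :=
  esChi_eq_one_characterization_general G
end

section
/- There exists a connected 6-regular finite simple graph X (of order 10) with χ(X) = 4, c*(X) = 1, and es_χ(X) = 2. In particular, the characterization 'es_χ(G) = 1 iff G is K_2, an odd cycle, or χ(G) > 3 and c*(G) = 1' for connected k-regular graphs with k ≤ 5 does not extend to k = 6. -/
/-!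
The counterexample is the complement `X` of a cubic graph on ten vertices, so it is 6-regular,
and any two non-adjacent vertices have a common neighbour because `6 + 6 > 10 - 2`.
The 4-coloring with classes `{0, 1, 2}`, `{3}`, `{4, 6, 8}`, `{5, 7, 9}` has the singleton class
`{3}`, and `3` has exactly two neighbours, `1` and `2`, in the class `{0, 1, 2}`; deleting these two
edges lets `3` join that class, so `es_χ(X) ≤ 2`. On the other hand `X` contains the two
4-cliques `{1, 3, 5, 8}` and `{2, 3, 4, 9}`, which share only the vertex `3` and hence no edge:
deleting a single edge leaves one of them intact, so `es_χ(X) ≥ 2`.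
-/

open Function

open Finset

namespace SimpleGraph

variable {V : Type*} {G : SimpleGraph V}

theorem connected_of_forall_le_degree [Fintype V] [DecidableRel G.Adj] [Nonempty V] {k : ℕ}
    (hcard : Fintype.card V ≤ 2 * k + 1) (hdeg : ∀ v, k ≤ G.degree v) : G.Connected := by
  classical
  refine (connected_iff G).2 ⟨fun u v => ?_, inferInstance⟩
  by_cases huv : u = v
  · exact huv ▸ Reachable.refl u
  by_cases hadj : G.Adj u v
  · exact hadj.reachable
  have hsub : G.neighborFinset u ∪ G.neighborFinset v ⊆ (univ.erase u).erase v := by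
    intro w hw
    simp only [mem_union, mem_neighborFinset] at hw
    simp only [mem_erase, mem_univ, and_true]
    rcases hw with hw | hw
    · exact ⟨fun h => hadj (h ▸ hw), hw.ne'⟩
    · exact ⟨hw.ne', fun h => hadj (h ▸ hw.symm)⟩
  have hcommon : ¬Disjoint (G.neighborFinset u) (G.neighborFinset v) := by
    intro hdisj
    have h := card_le_card hsub
    rw [card_union_of_disjoint hdisj, card_neighborFinset_eq_degree,
      card_neighborFinset_eq_degree, card_erase_of_mem (by simpa using Ne.symm huv),
      card_erase_of_mem (mem_univ u), card_univ] at h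
    have := Fintype.one_lt_card_iff.2 ⟨u, v, huv⟩
    have := hdeg u
    have := hdeg v
    omega
  obtain ⟨w, hwu, hwv⟩ := not_disjoint_iff.1 hcommon
  rw [mem_neighborFinset] at hwu hwv
  exact hwu.reachable.trans hwv.symm.reachable

theorem IsClique.deleteEdges_singleton {s : Set V} {a b : V} (hs : G.IsClique s)
    (hab : a ∉ s ∨ b ∉ s) : (G.deleteEdges {s(a, b)}).IsClique s := by
  intro u hu v hv huv
  refine (deleteEdges_adj ..).2 ⟨hs hu hv huv, ?_⟩
  rw [Set.mem_singleton_iff, Sym2.eq_iff]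
  rintro (⟨rfl, rfl⟩ | ⟨rfl, rfl⟩) <;> tauto

theorem chromaticNumber_le_deleteEdges_singleton {s : Finset V} {a b : V} (hs : G.IsClique s)
    (hχ : G.chromaticNumber ≤ #s) (hab : a ∉ s ∨ b ∉ s) :
    G.chromaticNumber ≤ (G.deleteEdges {s(a, b)}).chromaticNumber :=
  hχ.trans ((hs.deleteEdges_singleton (by simpa using hab)).card_le_chromaticNumber)

theorem chromaticNumber_le_deleteEdges_of_card_le_one [DecidableEq V] {s t : Finset V}
    (hs : G.IsClique s) (ht : G.IsClique t) (hst : #(s ∩ t) ≤ 1) (hχs : G.chromaticNumber ≤ #s)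
    (hχt : G.chromaticNumber ≤ #t) {F : Finset (Sym2 V)} (hF : ↑F ⊆ G.edgeSet) (hF1 : #F ≤ 1) :
    G.chromaticNumber ≤ (G.deleteEdges ↑F).chromaticNumber := by
  obtain hF0 | hF1 := Nat.le_one_iff_eq_zero_or_eq_one.1 hF1
  · simp [card_eq_zero.1 hF0]
  obtain ⟨e, rfl⟩ := card_eq_one.1 hF1
  induction e with | h a b => ?_
  have hab : a ≠ b := (hF (mem_coe.2 (mem_singleton_self _))).ne
  rw [coe_singleton]
  by_cases has : a ∈ s ∧ b ∈ s
  · refine chromaticNumber_le_deleteEdges_singleton ht hχt (not_and_or.1 fun hat => ?_)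
    have : 1 < #(s ∩ t) := one_lt_card.2
      ⟨a, mem_inter.2 ⟨has.1, hat.1⟩, b, mem_inter.2 ⟨has.2, hat.2⟩, hab⟩
    omega
  · exact chromaticNumber_le_deleteEdges_singleton hs hχs (not_and_or.1 has)

section Invariants

variable [Fintype V]

theorem esChi_eq_card {F : Finset (Sym2 V)} (hF : ↑F ⊆ G.edgeSet)
    (hlt : (G.deleteEdges ↑F).chromaticNumber < G.chromaticNumber)
    (hmin : ∀ F' : Finset (Sym2 V), ↑F' ⊆ G.edgeSet → #F' < #F →
      G.chromaticNumber ≤ (G.deleteEdges ↑F').chromaticNumber) :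
    esChi G = #F := by
  have hmem : #F ∈ {k | ∃ F : Finset (Sym2 V), ↑F ⊆ G.edgeSet ∧ #F = k ∧
      (G.deleteEdges ↑F).chromaticNumber < G.chromaticNumber} := ⟨F, hF, rfl, hlt⟩
  refine le_antisymm (Nat.sInf_le hmem) (le_csInf ⟨_, hmem⟩ ?_)
  rintro k ⟨F', hF', rfl, hlt'⟩
  by_contra! hk
  exact (hmin F' hF' hk).not_gt hlt'

theorem cStar_eq_one {n : ℕ} (hn : G.chromaticNumber = n) (c : G.Coloring (Fin n)) {i : Fin n}
    {v₀ : V} (hi : ∀ v, c v = i ↔ v = v₀) : cStar G = 1 := by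
  obtain rfl : G.chromaticNumber.toNat = n := by simp [hn]
  have hmem : 1 ∈ {k | ∃ (c : G.Coloring (Fin G.chromaticNumber.toNat))
      (i : Fin G.chromaticNumber.toNat), Surjective c ∧ k = #(classOf c i)} := by
    refine ⟨c, i, le_chromaticNumber_iff_forall_surjective.1 hn.ge c, ?_⟩
    rw [show classOf c i = {v₀} by ext v; simp [classOf, hi], card_singleton]
  refine le_antisymm (Nat.sInf_le hmem) (le_csInf ⟨1, hmem⟩ ?_)
  rintro k ⟨c', j, hc', rfl⟩
  obtain ⟨v, hv⟩ := hc' j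
  exact card_pos.2 ⟨v, by simp [classOf, hv]⟩

end Invariants

end SimpleGraph

open SimpleGraph

def cubicGraph : SimpleGraph (Fin 10) :=
  fromEdgeSet {s(0, 1), s(0, 2), s(0, 3), s(1, 2), s(1, 4), s(2, 5), s(3, 6), s(3, 7), s(4, 6),
    s(4, 8), s(5, 7), s(5, 9), s(6, 8), s(7, 9), s(8, 9)}

instance : DecidableRel cubicGraph.Adj := by unfold cubicGraph; infer_instance

abbrev counterexample : SimpleGraph (Fin 10) := cubicGraphᶜ

theorem cubicGraph_isRegularOfDegree : cubicGraph.IsRegularOfDegree 3 := by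
  intro v; revert v; decide

theorem counterexample_isRegularOfDegree : counterexample.IsRegularOfDegree 6 := by
  simpa using cubicGraph_isRegularOfDegree.compl

def fourColoring : counterexample.Coloring (Fin 4) :=
  Coloring.mk ![0, 0, 0, 1, 2, 3, 2, 3, 2, 3] (by decide)

def bondEdges : Finset (Sym2 (Fin 10)) := {s(1, 3), s(2, 3)}

def threeColoring : (counterexample.deleteEdges ↑bondEdges).Coloring (Fin 3) :=
  Coloring.mk ![0, 0, 0, 0, 1, 2, 1, 2, 1, 2] (by decide)

theorem counterexample_isClique_left :
    counterexample.IsClique ({1, 3, 5, 8} : Finset (Fin 10)) := by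
  decide

theorem counterexample_isClique_right :
    counterexample.IsClique ({2, 3, 4, 9} : Finset (Fin 10)) := by
  decide

theorem counterexample_chromaticNumber : counterexample.chromaticNumber = 4 :=
  le_antisymm fourColoring.colorable.chromaticNumber_le
    (by simpa using counterexample_isClique_left.card_le_chromaticNumber)

theorem bondEdges_subset_edgeSet : ↑bondEdges ⊆ counterexample.edgeSet := by
  rw [Set.subset_def]; decide

open scoped Classical in
/-- There is a connected 6-regular graph `X` of order 10 with
`χ(X) = 4`, `c*(X) = 1` and `es_χ(X) = 2`; hence the characterization of
`es_χ = 1` for connected `k`-regular graphs (`k ≤ 5`) does not extend to `k = 6`. -/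
theorem exists_six_regular_counterexample :
    ∃ X : SimpleGraph (Fin 10), X.Connected ∧ X.IsRegularOfDegree 6 ∧
      X.chromaticNumber = 4 ∧ cStar X = 1 ∧ esChi X = 2 := by
  have hχ := counterexample_chromaticNumber
  have hconn : counterexample.Connected :=
    connected_of_forall_le_degree (k := 6) (by simp) fun v =>
      (counterexample_isRegularOfDegree v).ge
  have hcStar : cStar counterexample = 1 :=
    cStar_eq_one hχ fourColoring (i := 1) (v₀ := 3) (by decide)
  have hlt : (counterexample.deleteEdges ↑bondEdges).chromaticNumber < 4 :=
    threeColoring.colorable.chromaticNumber_le.trans_lt (by norm_num)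
  have hmin : ∀ F : Finset (Sym2 (Fin 10)), ↑F ⊆ counterexample.edgeSet → #F < #bondEdges →
      counterexample.chromaticNumber ≤ (counterexample.deleteEdges ↑F).chromaticNumber :=
    fun F hF hcard => chromaticNumber_le_deleteEdges_of_card_le_one counterexample_isClique_left
      counterexample_isClique_right (by decide) (by simp [hχ]) (by simp [hχ]) hF
      (by simpa [bondEdges] using hcard)
  refine ⟨counterexample, hconn, by convert counterexample_isRegularOfDegree, hχ, hcStar, ?_⟩
  rw [esChi_eq_card bondEdges_subset_edgeSet (hχ ▸ hlt) hmin]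
  rfl
end

section
/- Let G be a connected finite simple graph of order n with χ(G) = 3 such that es_χ(G) = 1 and es_χ(Ḡ) = 1, where Ḡ is the complement of G. Then χ(Ḡ) ≥ ⌈n/2⌉. -/
open Function

/-!
Let `e = uv` be an edge of `G` whose removal makes `G` bipartite; then every triangle of `G`
passes through `u`. Let `ab` be an edge of `Ḡ` whose removal lowers `χ(Ḡ)`, and color
`Ḡ - ab` properly with `k ≤ χ(Ḡ) - 1` colors. Apart from the pair `ab`, each color class is
a clique of `G`, so a color class with `a` and `u` removed is a clique of `G` avoiding `u`,
hence has at most two vertices. Counting gives `n ≤ 2k + 2 ≤ 2χ(Ḡ)`.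
-/

open Finset

namespace SimpleGraph

variable {V : Type*} {G : SimpleGraph V}

lemma exists_chromaticNumber_deleteEdges_lt_of_esChi_eq_one [Fintype V] (h : esChi G = 1) :
    ∃ e ∈ G.edgeSet, (G.deleteEdges {e}).chromaticNumber < G.chromaticNumber := by
  have hmem : 1 ∈ {k | ∃ F : Finset (Sym2 V), ↑F ⊆ G.edgeSet ∧ F.card = k ∧
      (G.deleteEdges ↑F).chromaticNumber < G.chromaticNumber} :=
    h ▸ Nat.sInf_mem (Nat.nonempty_of_sInf_eq_succ h)
  obtain ⟨F, hFG, hF, hlt⟩ := hmem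
  obtain ⟨e, rfl⟩ := card_eq_one.mp hF
  exact ⟨e, hFG (by simp), by simpa using hlt⟩

lemma IsNClique.mem_of_colorable_deleteEdges {u v : V} {t : Finset V} (ht : G.IsNClique 3 t)
    (h : (G.deleteEdges {s(u, v)}).Colorable 2) : u ∈ t := by
  by_contra hu
  have hclique : (G.deleteEdges {s(u, v)}).IsClique (t : Set V) := by
    intro x hx y hy hxy
    refine (deleteEdges_adj ..).mpr ⟨ht.isClique hx hy hxy, ?_⟩
    rintro (hxy' : s(x, y) = s(u, v))
    rcases Sym2.eq_iff.mp hxy' with ⟨rfl, -⟩ | ⟨-, rfl⟩ <;> exact hu ‹_›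
  have := hclique.card_le_of_colorable h
  rw [ht.card_eq] at this
  omega

lemma IsClique.card_le_two_of_forall_isNClique_three_mem {u : V} {s : Finset V}
    (hu : ∀ t, G.IsNClique 3 t → u ∈ t) (hs : G.IsClique (s : Set V)) (hus : u ∉ s) :
    #s ≤ 2 := by
  by_contra! hlt
  obtain ⟨t, hts, ht⟩ := exists_subset_card_eq (show 3 ≤ #s by omega)
  exact hus (hts (hu t ⟨hs.subset (by simpa using hts), ht⟩))

lemma Coloring.isIndepSet_of_deleteEdges {H : SimpleGraph V} {α : Type*} {a b : V}
    (c : (H.deleteEdges {s(a, b)}).Coloring α) {i : α} {s : Set V} (hs : ∀ x ∈ s, c x = i)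
    (ha : a ∉ s) : H.IsIndepSet s := by
  intro x hx y hy hxy hadj
  refine c.valid ((deleteEdges_adj ..).mpr ⟨hadj, ?_⟩) ((hs x hx).trans (hs y hy).symm)
  rintro (hxy' : s(x, y) = s(a, b))
  rcases Sym2.eq_iff.mp hxy' with ⟨rfl, -⟩ | ⟨-, rfl⟩ <;> exact ha ‹_›

lemma card_le_two_mul_card_add_two_of_coloring_compl_deleteEdges [Fintype V] {α : Type*}
    [Fintype α] {u a b : V} (hu : ∀ t, G.IsNClique 3 t → u ∈ t)
    (c : (Gᶜ.deleteEdges {s(a, b)}).Coloring α) :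
    Fintype.card V ≤ 2 * Fintype.card α + 2 := by
  classical
  set s : Finset V := univ \ {u, a}
  have hfiber (i : α) : #{x ∈ s | c x = i} ≤ 2 := by
    refine IsClique.card_le_two_of_forall_isNClique_three_mem hu ?_ (by simp [s])
    rw [← isIndepSet_compl]
    exact c.isIndepSet_of_deleteEdges (i := i) (by simp) (by simp [s])
  have hs : #s ≤ 2 * Fintype.card α := by
    simpa using card_le_mul_card_image_of_maps_to (f := c) (t := univ)
      (fun _ _ ↦ mem_univ _) 2 (fun i _ ↦ hfiber i)
  calc Fintype.card V = #(univ : Finset V) := card_univ.symm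
    _ ≤ #s + #{u, a} := card_le_card_sdiff_add_card
    _ ≤ 2 * Fintype.card α + 2 := add_le_add hs card_le_two

end SimpleGraph

open SimpleGraph in
theorem chromaticNumber_compl_ge_general {V : Type*} [Fintype V] (G : SimpleGraph V)
    (hchi : G.chromaticNumber = 3)
    (h1 : esChi G = 1) (h2 : esChi Gᶜ = 1) :
    (((Fintype.card V + 1) / 2 : ℕ) : ℕ∞) ≤ Gᶜ.chromaticNumber := by
  obtain ⟨e, -, he⟩ := exists_chromaticNumber_deleteEdges_lt_of_esChi_eq_one h1
  obtain ⟨f, -, hf⟩ := exists_chromaticNumber_deleteEdges_lt_of_esChi_eq_one h2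
  induction e using Sym2.ind with | _ u v => ?_
  induction f using Sym2.ind with | _ a b => ?_
  have hbip : (G.deleteEdges {s(u, v)}).Colorable 2 := by
    rw [hchi] at he
    rw [← chromaticNumber_le_iff_colorable]
    exact (ENat.lt_add_one_iff (ENat.natCast_ne_top 2)).mp he
  set k := (Gᶜ.deleteEdges {s(a, b)}).chromaticNumber.toNat
  have hk : (k + 1 : ℕ∞) ≤ Gᶜ.chromaticNumber :=
    Order.add_one_le_of_lt ((ENat.natCast_toNat_le_self _).trans_lt hf)
  have hcard : Fintype.card V ≤ 2 * k + 2 := by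
    simpa using card_le_two_mul_card_add_two_of_coloring_compl_deleteEdges
      (fun t ht ↦ ht.mem_of_colorable_deleteEdges hbip)
      (colorable_chromaticNumber_of_fintype _).some
  calc (((Fintype.card V + 1) / 2 : ℕ) : ℕ∞) ≤ ((k + 1 : ℕ) : ℕ∞) := by gcongr; omega
    _ ≤ Gᶜ.chromaticNumber := mod_cast hk

/-- If `G` is a connected graph of order `n` with `χ(G) = 3`,
`es_χ(G) = 1` and `es_χ(Ḡ) = 1`, then `χ(Ḡ) ≥ ⌈n/2⌉`. -/
theorem chromaticNumber_compl_ge {V : Type*} [Fintype V] (G : SimpleGraph V)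
    (hconn : G.Connected) (hchi : G.chromaticNumber = 3)
    (h1 : esChi G = 1) (h2 : esChi Gᶜ = 1) :
    (((Fintype.card V + 1) / 2 : ℕ) : ℕ∞) ≤ Gᶜ.chromaticNumber :=
  chromaticNumber_compl_ge_general G hchi h1 h2
end

section
/- Let G be a finite simple graph of order n with χ(G) = 2. Then es_χ(G) equals ⌊n/2⌋·⌊n/2 + 1⌋ when n is odd (respectively ⌊n/2⌋² when n is even) if and only if G is a complete bipartite graph whose two parts have sizes differing by at most one. -/
open Function

/-! When `χ(G) = 2`, lowering the chromatic number means deleting every edge, so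
`es_χ(G) = |E(G)|`. A 2-colouring puts every edge between a colour class `A` and its complement,
whence `|E(G)| ≤ |A|·|Aᶜ| ≤ ⌊n/2⌋⌈n/2⌉`: the first inequality is an equality iff every pair across
the cut is an edge, the second iff the two parts differ in size by at most one. -/

open Finset

theorem mul_le_div_two_mul_succ_div_two (a b : ℕ) : a * b ≤ (a + b) / 2 * ((a + b + 1) / 2) := by
  rcases Nat.even_or_odd' (a + b) with ⟨m, hm | hm⟩
  · rw [hm, show (2 * m + 1) / 2 = m by omega, show 2 * m / 2 = m by omega]
    nlinarith [sq_nonneg ((a : ℤ) - b)]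
  · rw [hm, show (2 * m + 1 + 1) / 2 = m + 1 by omega, show (2 * m + 1) / 2 = m by omega]
    nlinarith [sq_nonneg ((a : ℤ) - b)]

theorem mul_eq_div_two_mul_succ_div_two_iff (a b : ℕ) :
    a * b = (a + b) / 2 * ((a + b + 1) / 2) ↔ a ≤ b + 1 ∧ b ≤ a + 1 := by
  rcases Nat.even_or_odd' (a + b) with ⟨m, hm | hm⟩
  · rw [hm, show (2 * m + 1) / 2 = m by omega, show 2 * m / 2 = m by omega]
    constructor
    · intro h
      have : a = b := by nlinarith
      omega
    · intro h
      obtain rfl : a = m := by omega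
      obtain rfl : b = a := by omega
      rfl
  · rw [hm, show (2 * m + 1 + 1) / 2 = m + 1 by omega, show (2 * m + 1) / 2 = m by omega]
    constructor
    · intro h
      constructor <;> nlinarith
    · intro h
      rcases (show a = m ∧ b = m + 1 ∨ a = m + 1 ∧ b = m by omega) with ⟨rfl, rfl⟩ | ⟨rfl, rfl⟩
      · rfl
      · ring

theorem ite_odd_eq_div_two_mul_succ_div_two (n : ℕ) :
    (if Odd n then n / 2 * (n / 2 + 1) else (n / 2) ^ 2) = n / 2 * ((n + 1) / 2) := by
  rcases Nat.even_or_odd' n with ⟨m, rfl | rfl⟩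
  · rw [if_neg (Nat.not_odd_iff_even.2 (even_two_mul m)), sq]
    congr 1; omega
  · rw [if_pos (odd_two_mul_add_one m)]
    congr 1; omega

namespace SimpleGraph

variable {V : Type*} {G : SimpleGraph V}

theorem chromaticNumber_lt_two_iff : G.chromaticNumber < 2 ↔ G = ⊥ := by
  rw [← colorable_one_iff, ← chromaticNumber_le_iff_colorable, Nat.cast_one,
    show (2 : ℕ∞) = 1 + 1 from rfl, ENat.lt_add_one_iff ENat.one_ne_top]

theorem esChi_eq_card_edgeFinset [Fintype V] [Fintype G.edgeSet] (h : G.chromaticNumber = 2) :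
    esChi G = #G.edgeFinset := by
  have hset : {k | ∃ F : Finset (Sym2 V), ↑F ⊆ G.edgeSet ∧ #F = k ∧
      (G.deleteEdges ↑F).chromaticNumber < G.chromaticNumber} = {#G.edgeFinset} := by
    ext k
    simp only [h, chromaticNumber_lt_two_iff, deleteEdges_eq_bot, Set.mem_ofPred_eq,
      Set.mem_singleton_iff]
    constructor
    · rintro ⟨F, hFG, rfl, hGF⟩
      rw [← coe_inj.1 ((coe_edgeFinset G).trans (hGF.antisymm hFG))]
    · rintro rfl
      exact ⟨G.edgeFinset, by simp, rfl, by simp⟩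
  rw [esChi, hset, csInf_singleton]

theorem Coloring.isBipartiteWith_compl [Fintype V] [DecidableEq V] (c : G.Coloring (Fin 2)) :
    G.IsBipartiteWith ↑({v | c v = 0} : Finset V) ↑({v | c v = 0} : Finset V)ᶜ where
  disjoint := disjoint_coe.2 disjoint_compl_right
  mem_of_adj u v huv := by
    have := c.valid huv
    simp only [coe_compl, coe_filter, mem_univ, true_and, Set.mem_compl_iff, Set.mem_ofPred_eq]
    omega

variable [Fintype V]

theorem isBipartiteWith_compl_and_forall_adj_iff [DecidableEq V] {A : Finset V} :
    (G.IsBipartiteWith ↑A ↑Aᶜ ∧ ∀ v ∈ A, ∀ w ∈ Aᶜ, G.Adj v w) ↔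
      ∀ u v, G.Adj u v ↔ (u ∈ A ∧ v ∉ A) ∨ (u ∉ A ∧ v ∈ A) := by
  constructor
  · rintro ⟨hbip, hall⟩ u v
    refine ⟨fun huv ↦ by simpa using hbip.mem_of_adj huv, ?_⟩
    rintro (⟨hu, hv⟩ | ⟨hu, hv⟩)
    · exact hall u hu v (mem_compl.2 hv)
    · exact (hall v hv u (mem_compl.2 hu)).symm
  · intro hadj
    refine ⟨⟨disjoint_coe.2 disjoint_compl_right, fun u v huv ↦ by simpa using (hadj u v).1 huv⟩,
      fun v hv w hw ↦ (hadj v w).2 (.inl ⟨hv, mem_compl.1 hw⟩)⟩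

variable [DecidableRel G.Adj] {s t : Finset V}

theorem IsBipartiteWith.card_edgeFinset_le_card_mul (h : G.IsBipartiteWith s t) :
    #G.edgeFinset ≤ #s * #t := by
  rw [← isBipartiteWith_sum_degrees_eq_card_edges h, ← smul_eq_mul]
  exact sum_le_card_nsmul s _ _ fun v hv ↦ isBipartiteWith_degree_le h hv

theorem IsBipartiteWith.card_edgeFinset_eq_card_mul_iff (h : G.IsBipartiteWith s t) :
    #G.edgeFinset = #s * #t ↔ ∀ v ∈ s, ∀ w ∈ t, G.Adj v w := by
  rw [← isBipartiteWith_sum_degrees_eq_card_edges h, ← smul_eq_mul, ← sum_const,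
    sum_eq_sum_iff_of_le fun v hv ↦ isBipartiteWith_degree_le h hv]
  refine forall₂_congr fun v hv ↦ ?_
  have hsub := isBipartiteWith_neighborFinset_subset h hv
  rw [← card_neighborFinset_eq_degree]
  constructor
  · intro hcard w hw
    rw [← mem_neighborFinset, eq_of_subset_of_card_le hsub hcard.ge]
    exact hw
  · intro hadj
    rw [hsub.antisymm fun w hw ↦ (mem_neighborFinset ..).2 (hadj w hw)]

end SimpleGraph

open SimpleGraph

open scoped Classical in
/-- For a graph `G` of order `n` with `χ(G) = 2`: `es_χ(G)` attains the
value `⌊n/2⌋·⌊n/2 + 1⌋` (`n` odd), resp. `⌊n/2⌋²` (`n` even), iff `G` is a complete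
bipartite graph whose parts differ in size by at most one. -/
theorem esChi_bipartite_extremal {V : Type*} [Fintype V] (G : SimpleGraph V)
    (hchi : G.chromaticNumber = 2) :
    (esChi G = if Odd (Fintype.card V)
        then (Fintype.card V / 2) * (Fintype.card V / 2 + 1)
        else (Fintype.card V / 2) ^ 2) ↔
      ∃ A : Finset V,
        (∀ u v : V, G.Adj u v ↔ ((u ∈ A ∧ v ∉ A) ∨ (u ∉ A ∧ v ∈ A))) ∧
        A.card ≤ Aᶜ.card + 1 ∧ Aᶜ.card ≤ A.card + 1 := by
  rw [esChi_eq_card_edgeFinset hchi, ite_odd_eq_div_two_mul_succ_div_two]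
  constructor
  · intro hcard
    obtain ⟨c⟩ := (chromaticNumber_eq_two_iff.1 hchi).1
    set A : Finset V := {v | c v = 0}
    have hbip : G.IsBipartiteWith ↑A ↑Aᶜ := c.isBipartiteWith_compl
    have hsize : #A * #Aᶜ ≤ Fintype.card V / 2 * ((Fintype.card V + 1) / 2) := by
      rw [← card_add_card_compl A]
      exact mul_le_div_two_mul_succ_div_two _ _
    have hcut : #G.edgeFinset = #A * #Aᶜ :=
      hbip.card_edgeFinset_le_card_mul.antisymm (hcard ▸ hsize)
    refine ⟨A, isBipartiteWith_compl_and_forall_adj_iff.1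
      ⟨hbip, hbip.card_edgeFinset_eq_card_mul_iff.1 hcut⟩, ?_⟩
    rw [← mul_eq_div_two_mul_succ_div_two_iff, card_add_card_compl, ← hcut, hcard]
  · rintro ⟨A, hadj, hA, hAc⟩
    obtain ⟨hbip, hall⟩ := isBipartiteWith_compl_and_forall_adj_iff.2 hadj
    rw [hbip.card_edgeFinset_eq_card_mul_iff.2 hall, ← card_add_card_compl A]
    exact (mul_eq_div_two_mul_succ_div_two_iff _ _).2 ⟨hA, hAc⟩
end

section
/- Let G be a finite simple graph of order n with r = χ(G), where n ≡ r − 1 (mod r), and suppose es_χ(G) = ⌊n/r⌋·⌊n/r + 1⌋. Then for every proper coloring of G with exactly r color classes C_1, …, C_r ordered so that |C_1| ≤ ⋯ ≤ |C_r|, one has |C_1| = ⌊n/r⌋ and |C_2| = ⋯ = |C_r| = ⌊n/r⌋ + 1. In particular, every such coloring is equitable. -/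
open Function

open Finset

/-!
Deleting the edges between two colour classes `C_i, C_j` of a `χ(G)`-colouring lets the two
classes merge, so `es_χ(G) ≤ |C_i| |C_j|`. Apply this to the two smallest classes `a ≤ b`
and write `n = q + (r - 1)(q + 1)`. The hypothesis gives `q (q + 1) ≤ a b`, while the monotone
ordering gives `a + (r - 1) b ≤ n`; together these force `a = q` and `b = q + 1`, and then the
remaining `r - 1` classes, each of size at least `q + 1`, must have size exactly `q + 1`.
-/

section Stability

variable {V : Type*} [Fintype V] {G : SimpleGraph V}

lemma esChi_le_card_of_chromaticNumber_lt (F : Finset (Sym2 V)) (hF : ↑F ⊆ G.edgeSet)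
    (hlt : (G.deleteEdges ↑F).chromaticNumber < G.chromaticNumber) :
    esChi G ≤ #F :=
  Nat.sInf_le ⟨F, hF, rfl, hlt⟩

lemma eCC_le_card_mul_card (A B : Finset V) : eCC G A B ≤ #A * #B := by
  classical
  exact (card_filter_le _ _).trans (card_product A B).le

lemma sum_card_classOf {α : Type*} [Fintype α] (c : G.Coloring α) :
    ∑ i, #(classOf c i) = Fintype.card V := by
  classical
  rw [← card_univ, card_eq_sum_card_fiberwise (f := c) (t := univ) (fun _ _ => mem_univ _)]
  refine sum_congr rfl fun i _ => ?_
  congr 1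

lemma esChi_le_eCC_classOf {α : Type*} [Fintype α] (c : G.Coloring α)
    (hchi : G.chromaticNumber = Fintype.card α) {i j : α} (hij : i ≠ j) :
    esChi G ≤ eCC G (classOf c i) (classOf c j) := by
  classical
  set F := ((classOf c i ×ˢ classOf c j).filter fun p => G.Adj p.1 p.2).image
    fun p => s(p.1, p.2)
  have hmem : ∀ u v, G.Adj u v → c u = i → c v = j → s(u, v) ∈ F :=
    fun u v huv hu hv => mem_image.2 ⟨(u, v), by simp [classOf, hu, hv, huv], rfl⟩
  have hsub : ↑F ⊆ G.edgeSet := by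
    intro e he
    obtain ⟨p, hp, rfl⟩ := mem_image.1 he
    exact (mem_filter.1 hp).2
  -- colour `j` is recoloured `i`; only edges of `F` can become monochromatic
  let merged : (G.deleteEdges ↑F).Coloring {k // k ≠ j} :=
    SimpleGraph.Coloring.mk (fun v => if h : c v = j then ⟨i, hij⟩ else ⟨c v, h⟩) <| by
      intro u v huvF heq
      obtain ⟨huv, hnot⟩ := SimpleGraph.deleteEdges_adj.1 huvF
      have hne := c.valid huv
      by_cases hu : c u = j <;> by_cases hv : c v = j <;>
        simp only [hu, hv, dite_true, dite_false, Subtype.mk.injEq] at heq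
      · exact hne (hu.trans hv.symm)
      · exact hnot (Sym2.eq_swap ▸ hmem v u huv.symm heq.symm hu)
      · exact hnot (hmem u v huv heq hv)
      · exact hne heq
  have hlt : (G.deleteEdges ↑F).chromaticNumber < G.chromaticNumber := by
    rw [hchi]
    exact merged.colorable.chromaticNumber_le.trans_lt
      (by exact_mod_cast Fintype.card_subtype_lt (p := (· ≠ j)) (not_not.2 rfl))
  exact (esChi_le_card_of_chromaticNumber_lt F hsub hlt).trans card_image_le

end Stability

lemma eq_and_eq_add_one_of_mul_le_of_add_mul_le {s q a b : ℕ} (hq : 1 ≤ q)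
    (hab : a ≤ b) (hmul : q * (q + 1) ≤ a * b) (hsum : a + (s + 1) * b ≤ q + (s + 1) * (q + 1)) :
    a = q ∧ b = q + 1 := by
  zify at hq hab hmul hsum
  have ha_le : (a : ℤ) ≤ q := by nlinarith
  -- `a (n - a) ≥ (s + 1) a b ≥ (s + 1) q (q + 1)` rearranges to `(q - a)(a - (s + 1)(q + 1)) ≥ 0`
  have ha_ge : (q : ℤ) ≤ a := by
    by_contra! h
    have : (0 : ℤ) < (q - a) * ((s + 1) * (q + 1) - a) := by apply mul_pos <;> nlinarith
    nlinarith [mul_le_mul_of_nonneg_left hsum (by positivity : (0 : ℤ) ≤ a)]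
  obtain rfl : a = q := by exact_mod_cast le_antisymm ha_le ha_ge
  refine ⟨rfl, ?_⟩
  zify
  exact le_antisymm (by nlinarith) (by nlinarith)

lemma Monotone.apply_eq_of_sum_eq_of_mul_le {s q : ℕ} {x : Fin (s + 2) → ℕ} (hx : Monotone x)
    (hq : 1 ≤ q) (hmul : q * (q + 1) ≤ x 0 * x 1) (hsum : ∑ i, x i = q + (s + 1) * (q + 1)) :
    x 0 = q ∧ ∀ i ≠ 0, x i = q + 1 := by
  rw [Fin.sum_univ_succ] at hsum
  have hrest : ∀ i : Fin (s + 1), x 1 ≤ x i.succ :=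
    fun i => hx (Fin.one_le_of_ne_zero i.succ_ne_zero)
  have hle : (s + 1) * x 1 ≤ ∑ i : Fin (s + 1), x i.succ := by
    simpa using sum_le_sum fun i (_ : i ∈ univ) => hrest i
  obtain ⟨h0, h1⟩ := eq_and_eq_add_one_of_mul_le_of_add_mul_le (s := s) hq (hx (Fin.zero_le 1))
    hmul (by omega)
  have htail : ∑ i : Fin (s + 1), x i.succ = ∑ _i : Fin (s + 1), (q + 1) := by simp; omega
  refine ⟨h0, fun i hi => ?_⟩
  obtain ⟨k, rfl⟩ := Fin.exists_succ_eq.2 hi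
  exact ((sum_eq_sum_iff_of_le fun k _ => h1 ▸ hrest k).1 htail.symm k (mem_univ k)).symm

/-- If `n ≡ r − 1 (mod r)` where `r = χ(G)` and
`es_χ(G) = ⌊n/r⌋·⌊n/r + 1⌋`, then every proper coloring of `G` with exactly `r`
color classes ordered by nondecreasing size has `|C₁| = ⌊n/r⌋` and
`|C₂| = ⋯ = |C_r| = ⌊n/r⌋ + 1`; in particular every such coloring is equitable. -/
theorem extremal_coloring_classes_sizes {V : Type*} [Fintype V] (G : SimpleGraph V)
    (r : ℕ) (hchi : G.chromaticNumber = r)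
    (hmod : Fintype.card V % r = r - 1)
    (hes : esChi G = (Fintype.card V / r) * (Fintype.card V / r + 1)) :
    ∀ c : G.Coloring (Fin r), Surjective c →
      (∀ i j : Fin r, i ≤ j → (classOf c i).card ≤ (classOf c j).card) →
      ((∀ i : Fin r, i.val = 0 → (classOf c i).card = Fintype.card V / r) ∧
       (∀ i : Fin r, i.val ≠ 0 → (classOf c i).card = Fintype.card V / r + 1) ∧
       (∀ i j : Fin r, (classOf c i).card ≤ (classOf c j).card + 1)) := by
  intro c hsurj hmono
  have hsum := sum_card_classOf c
  rcases r with _ | _ | s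
  · exact ⟨fun i => i.elim0, fun i => i.elim0, fun i => i.elim0⟩
  · rw [Fin.sum_univ_one] at hsum
    refine ⟨fun i _ => ?_, fun i hi => absurd (Fin.val_eq_zero i) hi, fun i j => ?_⟩
    · rw [Subsingleton.elim (α := Fin 1) i 0, hsum, Nat.div_one]
    · rw [Subsingleton.elim (α := Fin 1) i j]; omega
  set q := Fintype.card V / (s + 2) with hq_def
  have hn : Fintype.card V = q + (s + 1) * (q + 1) := by
    have := Nat.div_add_mod (Fintype.card V) (s + 2)
    rw [hmod, ← hq_def, Nat.add_sub_cancel] at this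
    linarith
  have hq : 1 ≤ q := by
    have := Fintype.card_le_of_surjective c hsurj
    simp only [Fintype.card_fin] at this; nlinarith
  have hmul : q * (q + 1) ≤ #(classOf c 0) * #(classOf c 1) :=
    hes ▸ (esChi_le_eCC_classOf c (by simpa using hchi) (by simp)).trans
      (eCC_le_card_mul_card _ _)
  obtain ⟨h0, hsize⟩ := Monotone.apply_eq_of_sum_eq_of_mul_le (x := fun i => #(classOf c i))
    hmono hq hmul (hsum.trans hn)
  have hbounds : ∀ i, q ≤ #(classOf c i) ∧ #(classOf c i) ≤ q + 1 := by
    intro i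
    rcases eq_or_ne i 0 with rfl | hi
    · omega
    · have := hsize i hi; omega
  refine ⟨fun i hi => Fin.val_eq_zero_iff.1 hi ▸ h0, fun i hi => hsize i (by simpa using hi),
    fun i j => by have := hbounds i; have := hbounds j; omega⟩
end
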